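/- arXiv:2309.01902 — 2 statements merged into one kernel-verified Lean document; each statement's English description precedes it below -/
import Mathlib

section
/- Let d be a metric on n points and T* a minimum-length Hamiltonian cycle. Then Δ = Σ_i Σ_{j≠i} d(i,j) ≤ (n²/4)·d(T*). -/
/-!
Write the tour as a bijection `σ : Fin n ≃ V`, so that every ordered pair of distinct points is
`(σ a, σ (a + c))` for exactly one `a` and one shift `c ≠ 0`. For a fixed shift, the triangle
inequality along the `c` forward edges from each `σ a` traverses every edge of the tour exactly `c`
times, so `∑ a, d (σ a) (σ (a + c)) ≤ c · L`; by symmetry the backward arcs give `(n - c) · L`.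
Summing `min c (n - c)` over all shifts gives at most `n² / 4`.
-/

open Finset

theorem four_mul_sum_range_min_sub_le : ∀ n : ℕ, 4 * ∑ c ∈ range n, min c (n - c) ≤ n ^ 2
  | 0 => by simp
  | 1 => by simp
  | n + 2 => by
    have peel : ∑ c ∈ range (n + 2), min c (n + 2 - c) = ∑ c ∈ range n, min c (n - c) + (n + 1) := by
      rw [sum_range_succ', sum_range_succ]
      have shift : ∀ c ∈ range n, min (c + 1) (n + 2 - (c + 1)) = min c (n - c) + 1 := by
        intro c hc
        rw [mem_range] at hc
        omega
      rw [sum_congr rfl shift, sum_add_distrib, sum_const, card_range, smul_eq_mul, mul_one]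
      omega
    have := four_mul_sum_range_min_sub_le n
    rw [peel]
    nlinarith

theorem sum_fin_min_val_sub_le (n : ℕ) :
    ∑ c : Fin n, ((min c.val (n - c.val) : ℕ) : ℝ) ≤ n ^ 2 / 4 := by
  rw [Fin.sum_univ_eq_sum_range (fun c => ((min c (n - c) : ℕ) : ℝ)), ← Nat.cast_sum,
    le_div_iff₀ (by norm_num), mul_comm]
  exact_mod_cast four_mul_sum_range_min_sub_le n

section Tour

variable {V : Type*} {n : ℕ} [NeZero n] (d : V → V → ℝ) (σ : Fin n → V)

def tourLength : ℝ := ∑ i, d (σ i) (σ (i + 1))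

theorem sum_shift_eq_tourLength (t : Fin n) :
    ∑ a, d (σ (a + t)) (σ (a + t + 1)) = tourLength d σ :=
  Equiv.sum_comp (Equiv.addRight t) fun b => d (σ b) (σ (b + 1))

variable {d}

open Fin.NatCast in
theorem sum_dist_add_natCast_le (htri : ∀ x y z, d x z ≤ d x y + d y z) (hrefl : ∀ x, d x x = 0)
    (k : ℕ) : ∑ a, d (σ a) (σ (a + k)) ≤ k * tourLength d σ := by
  induction k with
  | zero => simp [hrefl]
  | succ k ih =>
    calc ∑ a, d (σ a) (σ (a + ↑(k + 1)))
        ≤ ∑ a, (d (σ a) (σ (a + k)) + d (σ (a + k)) (σ (a + k + 1))) := by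
          gcongr with a
          rw [Nat.cast_succ, ← add_assoc]
          exact htri _ _ _
      _ = ∑ a, d (σ a) (σ (a + k)) + tourLength d σ := by
          rw [sum_add_distrib, sum_shift_eq_tourLength]
      _ ≤ ↑(k + 1) * tourLength d σ := by
          push_cast
          linarith

open Fin.NatCast in
theorem sum_dist_add_le_min_mul_tourLength (hsymm : ∀ x y, d x y = d y x)
    (htri : ∀ x y z, d x z ≤ d x y + d y z) (hrefl : ∀ x, d x x = 0) (c : Fin n) :
    ∑ a, d (σ a) (σ (a + c)) ≤ ((min c.val (n - c.val) : ℕ) : ℝ) * tourLength d σ := by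
  have forward : ∑ a, d (σ a) (σ (a + c)) ≤ c.val * tourLength d σ := by
    simpa using sum_dist_add_natCast_le σ htri hrefl c.val
  have complement : ((n - c.val : ℕ) : Fin n) + c = 0 := by
    have : ((n - c.val + c.val : ℕ) : Fin n) = 0 := by
      rw [Nat.sub_add_cancel c.isLt.le, Fin.natCast_self]
    rwa [Nat.cast_add, Fin.cast_val_eq_self] at this
  have backward : ∑ a, d (σ a) (σ (a + c)) ≤ ↑(n - c.val) * tourLength d σ := by
    rw [← Equiv.sum_comp (Equiv.addRight ((n - c.val : ℕ) : Fin n))]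
    simp only [Equiv.coe_addRight, add_assoc, complement, add_zero, hsymm (σ (_ + _))]
    exact sum_dist_add_natCast_le σ htri hrefl _
  rcases le_total c.val (n - c.val) with h | h
  · rwa [min_eq_left h]
  · rwa [min_eq_right h]

variable [Fintype V] [DecidableEq V]

theorem sum_sum_sdiff_eq_sum_sum_dist_add (hrefl : ∀ x, d x x = 0) (σ : Fin n ≃ V) :
    ∑ i, ∑ j ∈ univ \ {i}, d i j = ∑ c : Fin n, ∑ a, d (σ a) (σ (a + c)) :=
  calc ∑ i, ∑ j ∈ univ \ {i}, d i j = ∑ i, ∑ j, d i j := by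
        refine sum_congr rfl fun i _ => ?_
        rw [← sum_sdiff (subset_univ {i}), sum_singleton, hrefl, add_zero]
    _ = ∑ a, ∑ b, d (σ a) (σ b) :=
        (σ.sum_comp _).symm.trans (sum_congr rfl fun a _ => (σ.sum_comp _).symm)
    _ = ∑ a, ∑ c, d (σ a) (σ (a + c)) :=
        sum_congr rfl fun a _ => (Equiv.sum_comp (Equiv.addLeft a) _).symm
    _ = _ := sum_comm

end Tour

theorem stmt_12_general (n : ℕ) [NeZero n] (V : Type) [Fintype V] [DecidableEq V]
    (d : V → V → ℝ) (hnonneg : ∀ x y, 0 ≤ d x y) (hsymm : ∀ x y, d x y = d y x)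
    (htri : ∀ x y z, d x z ≤ d x y + d y z) (hrefl : ∀ x, d x x = 0)
    (σ : Fin n ≃ V) :
    ∑ i : V, ∑ j ∈ Finset.univ \ {i}, d i j
      ≤ ((n : ℝ) ^ 2 / 4) * ∑ i : Fin n, d (σ i) (σ (i + 1)) := by
  have hL : 0 ≤ tourLength d σ := sum_nonneg fun i _ => hnonneg _ _
  calc ∑ i : V, ∑ j ∈ univ \ {i}, d i j = ∑ c : Fin n, ∑ a, d (σ a) (σ (a + c)) :=
        sum_sum_sdiff_eq_sum_sum_dist_add hrefl σ
    _ ≤ ∑ c : Fin n, ((min c.val (n - c.val) : ℕ) : ℝ) * tourLength d σ :=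
        sum_le_sum fun c _ => sum_dist_add_le_min_mul_tourLength σ hsymm htri hrefl c
    _ = (∑ c : Fin n, ((min c.val (n - c.val) : ℕ) : ℝ)) * tourLength d σ := (sum_mul ..).symm
    _ ≤ _ := mul_le_mul_of_nonneg_right (sum_fin_min_val_sub_le n) hL

theorem stmt_12 (n : ℕ) [NeZero n] (hn : Even n) (h4 : 4 ≤ n) (V : Type) [Fintype V] [DecidableEq V]
    (hcard : Fintype.card V = n)
    (d : V → V → ℝ) (hnonneg : ∀ x y, 0 ≤ d x y) (hsymm : ∀ x y, d x y = d y x)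
    (htri : ∀ x y z, d x z ≤ d x y + d y z) (hrefl : ∀ x, d x x = 0)
    (σ : Fin n ≃ V) (hmin : ∀ τ : Fin n ≃ V,
      ∑ i : Fin n, d (σ i) (σ (i + 1)) ≤ ∑ i : Fin n, d (τ i) (τ (i + 1))) :
    ∑ i : V, ∑ j ∈ Finset.univ \ {i}, d i j
      ≤ ((n : ℝ) ^ 2 / 4) * ∑ i : Fin n, d (σ i) (σ (i + 1)) :=
  stmt_12_general n V d hnonneg hsymm htri hrefl σ
end

section
/- (Home/away pattern feasibility for team t_n) Let n be even, 2 ≤ k < n - 1, and r = (n-1) mod 2k with r ≥ 1. Consider the binary sequence of length n-1 over alphabet {A, H} defined by: if r > k, the sequence is A^k H^k A^k H^k ... A^k H^{r-k}; if r ≤ k, the sequence is H A^{k-1} H^k A^k H^k ... A^k H^k A^r (blocks of size k alternating after the initial modification). Then the sequence contains no run of more than k equal consecutive symbols. -/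
theorem stmt_15 (n k : ℕ) (hn : Even n) (h4 : 4 ≤ n) (hk2 : 2 ≤ k) (hk : k < n - 1) :
    let r := (n - 1) % (2 * k)
    -- `true` stands for an away game (A), `false` for a home game (H)
    let f : ℕ → Bool := fun i =>
      if k < r then decide ((i / k) % 2 = 0)
      else if i = 0 then false else decide ((i / k) % 2 = 0)
    1 ≤ r ∧ ∀ i : ℕ, i + k ≤ n - 2 → ∃ t : ℕ, t ≤ k ∧ f (i + t) ≠ f i := by
  intro r f
  have hodd : Odd (n - 1) := by
    rcases hn with ⟨m, hm⟩
    exact ⟨m - 1, by omega⟩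
  have hr : 1 ≤ r := by
    obtain ⟨m, hm⟩ := hodd.mod_even (even_two_mul k)
    omega
  refine ⟨hr, fun i _ => ?_⟩
  have hdiv : (i + k) / k = i / k + 1 := Nat.add_div_right i (by omega)
  by_cases hkr : k < r
  · refine ⟨k, le_refl k, ?_⟩
    simp only [f, if_pos hkr, hdiv, ne_eq, decide_eq_decide]
    omega
  · by_cases hi : i = 0
    · refine ⟨1, by omega, ?_⟩
      subst hi
      simp only [f, if_neg hkr]
      norm_num
      simp [Nat.div_eq_of_lt (by omega : 1 < k)]
    · refine ⟨k, le_refl k, ?_⟩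
      simp only [f, if_neg hkr, if_neg hi, if_neg (show i + k ≠ 0 by omega), hdiv,
        ne_eq, decide_eq_decide]
      omega
end
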